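/- arXiv:2604.12924 — 7 statements merged into one kernel-verified Lean document; each statement's English description precedes it below -/
import Mathlib

section
/- Let A be a C*-algebra for which there exists γ > 0 with ‖ab‖ ≤ γ‖ba‖ for all a, b ∈ A. Then A contains no non-zero element x with x² = 0. -/
theorem stmt_3 (A : Type*) [NonUnitalNormedRing A] [StarRing A] [CStarRing A]
    [NormedSpace ℂ A] [IsScalarTower ℂ A A] [SMulCommClass ℂ A A] [StarModule ℂ A]
    [CompleteSpace A]
    (γ : ℝ) (hγ : 0 < γ) (hLP : ∀ a b : A, ‖a * b‖ ≤ γ * ‖b * a‖) :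
    ¬ ∃ x : A, x ≠ 0 ∧ x * x = 0 := by
  rintro ⟨x, hx, hx2⟩
  have h1 : (star x * x) * x = 0 := by rw [mul_assoc, hx2, mul_zero]
  have h := hLP x (star x * x)
  rw [h1, norm_zero, mul_zero] at h
  have h2 : x * (star x * x) = 0 := norm_le_zero_iff.mp h
  have h3 : (x * star x) * (x * star x) = 0 := by
    have : (x * star x) * (x * star x) = (x * (star x * x)) * star x := by
      simp only [mul_assoc]
    rw [this, h2, zero_mul]
  have hsa : star (x * star x) = x * star x := by simp [mul_comm]
  have h4 : ‖x * star x‖ * ‖x * star x‖ = 0 := by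
    rw [← CStarRing.norm_star_mul_self (x := x * star x), hsa, h3, norm_zero]
  have h5 : x * star x = 0 := norm_eq_zero.mp (by nlinarith [norm_nonneg (x * star x)])
  have h6 : ‖x‖ * ‖x‖ = 0 := by rw [← CStarRing.norm_self_mul_star (x := x), h5, norm_zero]
  exact hx (norm_eq_zero.mp (by nlinarith [norm_nonneg x]))
end

section
/- (Le Page's theorem) Let A be a unital complex Banach algebra for which there exists γ > 0 satisfying ‖ab‖ ≤ γ‖ba‖ for all a, b ∈ A. Then A is commutative. -/
/-!
For fixed `a b`, the conjugation orbit `z ↦ exp (z • a) * b * exp (-(z • a))` is an entire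
function of `z : ℂ`. Le Page's inequality, applied with the outer exponentials swapped, bounds it
by `γ * ‖b‖`, so by Liouville it is constant; its derivative at `0`, which is `a * b - b * a`,
therefore vanishes.
-/

open NormedSpace Bornology Set

section

variable {𝕂 𝔸 : Type*} [RCLike 𝕂] [NormedRing 𝔸] [NormedAlgebra 𝕂 𝔸] [CompleteSpace 𝔸]

theorem exp_neg_smul_mul_exp_smul (t : 𝕂) (a : 𝔸) : exp (-(t • a)) * exp (t • a) = 1 :=
  letI := NormedAlgebra.restrictScalars ℚ 𝕂 𝔸
  letI := invertibleExp (t • a)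
  invOf_exp (t • a) ▸ invOf_mul_self (exp (t • a))

theorem hasDerivAt_exp_smul_mul_mul_exp_neg_smul (a b : 𝔸) (t : 𝕂) :
    HasDerivAt (fun u : 𝕂 => exp (u • a) * b * exp (-(u • a)))
      (exp (t • a) * (a * b - b * a) * exp (-(t • a))) t := by
  have hneg : HasDerivAt (fun u : 𝕂 => exp (-(u • a))) (-(a * exp (-(t • a)))) t := by
    simpa [Function.comp_def, neg_smul] using
      (hasDerivAt_exp_smul_const' a (-t)).scomp t (hasDerivAt_neg t)
  exact (((hasDerivAt_exp_smul_const a t).mul_const b).mul hneg).congr_deriv (by noncomm_ring)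

end

theorem commute_of_isBounded_range_exp_smul_mul_mul_exp_neg_smul
    {𝔸 : Type*} [NormedRing 𝔸] [NormedAlgebra ℂ 𝔸] [CompleteSpace 𝔸] (a b : 𝔸)
    (hb : IsBounded (range fun z : ℂ => exp (z • a) * b * exp (-(z • a)))) : Commute a b := by
  obtain ⟨c, hc⟩ := Differentiable.exists_eq_const_of_bounded
    (fun z => (hasDerivAt_exp_smul_mul_mul_exp_neg_smul a b z).differentiableAt) hb
  have h0 := hasDerivAt_exp_smul_mul_mul_exp_neg_smul a b (0 : ℂ)
  rw [hc] at h0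
  simpa [sub_eq_zero, commute_iff_eq] using h0.unique (hasDerivAt_const (0 : ℂ) c)

theorem stmt_4_general (A : Type*) [NormedRing A] [NormedAlgebra ℂ A] [CompleteSpace A]
    (γ : ℝ) (hLP : ∀ a b : A, ‖a * b‖ ≤ γ * ‖b * a‖) :
    ∀ a b : A, a * b = b * a := by
  intro a b
  refine commute_of_isBounded_range_exp_smul_mul_mul_exp_neg_smul a b ?_
  refine isBounded_iff_forall_norm_le.2 ⟨γ * ‖b‖, ?_⟩
  rintro _ ⟨z, rfl⟩
  calc ‖exp (z • a) * b * exp (-(z • a))‖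
      ≤ γ * ‖exp (-(z • a)) * (exp (z • a) * b)‖ := hLP _ _
    _ = γ * ‖b‖ := by rw [← mul_assoc, exp_neg_smul_mul_exp_smul, one_mul]

theorem stmt_4 (A : Type*) [NormedRing A] [NormedAlgebra ℂ A] [CompleteSpace A]
    (γ : ℝ) (hγ : 0 < γ) (hLP : ∀ a b : A, ‖a * b‖ ≤ γ * ‖b * a‖) :
    ∀ a b : A, a * b = b * a :=
  stmt_4_general A γ hLP
end

section
/- (Kaplansky) Let A be a C*-algebra which is not commutative. Then there exists a non-zero x ∈ A with x² = 0. -/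
/-!
If `q * p = 0` in a ring without nonzero square-zero elements, then `p * x * q = 0` for every
`x`, because `(p * x * q) ^ 2 = 0`. For a self-adjoint `a` and real `t`, applying this to the
positive and negative parts of `a - t` gives `(a - t) x (a - t)⁺ = (a - t)⁺ x (a - t)`.
Integrating in `t` over an interval `(-c, c]` containing the spectrum of `a` replaces the ramps
`(s - t)⁺` by the polynomials `(s + c)² / 2` and `s³ / 6 - c² s / 2 - c³ / 3`, and the resulting
identity is `ad_a³ = 0`. The Leibniz rule for `ad_a` then gives `ad_a² = 0` and `ad_a = 0`, so
self-adjoint elements, and hence all elements, are central. The non-unital case reduces to the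
unitization.
-/

open MeasureTheory Set
open scoped CStarAlgebra ComplexStarModule

section ReducedRing

variable {R : Type*} [Ring R]

theorem mul_mul_eq_zero_of_mul_eq_zero [IsReduced R] {p q : R} (h : q * p = 0) (x : R) :
    p * x * q = 0 :=
  IsReduced.eq_zero _ ⟨2, by rw [pow_two, mul_assoc, ← mul_assoc q, ← mul_assoc q, h]; simp⟩

theorem sub_mul_mul_comm_of_mul_eq_zero [IsReduced R] {p q : R} (hpq : p * q = 0)
    (hqp : q * p = 0) (x : R) : (p - q) * x * p = p * x * (p - q) := by
  rw [sub_mul, sub_mul, mul_mul_eq_zero_of_mul_eq_zero hpq, mul_sub,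
    mul_mul_eq_zero_of_mul_eq_zero hqp]

theorem leibniz_two (D : R →+ R) (hD : ∀ u v, D (u * v) = D u * v + u * D v) (u v : R) :
    D (D (u * v)) = D (D u) * v + 2 • (D u * D v) + u * D (D v) := by
  rw [hD, map_add, hD, hD]
  abel

variable [IsReduced R] [IsAddTorsionFree R]

theorem eq_zero_of_leibniz_of_iterate_two (D : R →+ R)
    (hD : ∀ u v, D (u * v) = D u * v + u * D v) (h2 : ∀ x, D (D x) = 0) (x : R) : D x = 0 := by
  apply IsReduced.eq_zero _ ⟨2, ?_⟩
  apply nsmul_right_injective two_ne_zero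
  simpa [h2, pow_two] using (leibniz_two D hD x x).symm

theorem iterate_two_eq_zero_of_leibniz_of_iterate_three (D : R →+ R)
    (hD : ∀ u v, D (u * v) = D u * v + u * D v) (h3 : ∀ x, D (D (D x)) = 0) (x : R) :
    D (D x) = 0 := by
  have hexpand (u v : R) : D (D (D (u * v))) =
      D (D (D u)) * v + 3 • (D (D u) * D v + D u * D (D v)) + u * D (D (D v)) := by
    rw [leibniz_two D hD, map_add, map_add, map_nsmul, hD, hD, hD]
    abel
  apply IsReduced.eq_zero _ ⟨2, ?_⟩
  apply nsmul_right_injective three_ne_zero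
  simpa [h3, pow_two] using (hexpand x (D x)).symm

end ReducedRing

theorem Unitization.isReduced {R A : Type*} [CommRing R] [IsReduced R] [NonUnitalRing A]
    [Module R A] [IsScalarTower R A A] [SMulCommClass R A A]
    (hA : ∀ z : A, z * z = 0 → z = 0) : IsReduced (Unitization R A) := by
  rw [isReduced_iff_pow_one_lt 2 one_lt_two]
  intro z hz
  rw [pow_two] at hz
  have hfst : z.fst = 0 :=
    IsReduced.eq_zero _ ⟨2, by rw [pow_two, ← Unitization.fst_mul, hz, Unitization.fst_zero]⟩
  have hsnd : z.snd * z.snd = 0 := by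
    simpa [hfst] using congrArg (fun w : Unitization R A => w.snd) hz
  exact Unitization.ext hfst (hA _ hsnd)

theorem exists_spectrum_subset_Icc {A : Type*} [NormedRing A] [NormedAlgebra ℝ A]
    [CompleteSpace A] (a : A) : ∃ c, spectrum ℝ a ⊆ Icc (-c) c := by
  obtain ⟨c, hc⟩ := (spectrum.isCompact (𝕜 := ℝ) a).isBounded.subset_closedBall 0
  exact ⟨c, by simpa [Real.closedBall_eq_Icc] using hc⟩

theorem setIntegral_mul_max_sub_zero {g : ℝ → ℝ} (hg : Continuous g) {c s : ℝ}
    (hs : s ∈ Icc (-c) c) :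
    ∫ t in Ioc (-c) c, g t * max (s - t) 0 = ∫ t in (-c)..s, g t * (s - t) := by
  have hcont : Continuous fun t => g t * max (s - t) 0 := by fun_prop
  rw [← intervalIntegral.integral_of_le (hs.1.trans hs.2),
    ← intervalIntegral.integral_add_adjacent_intervals (b := s)
      (hcont.intervalIntegrable _ _) (hcont.intervalIntegrable _ _)]
  have hright : ∫ t in s..c, g t * max (s - t) 0 = 0 := by
    refine intervalIntegral.integral_zero_ae (.of_forall fun t ht => ?_)
    rw [uIoc_of_le hs.2] at ht
    rw [max_eq_right (by linarith [ht.1]), mul_zero]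
  rw [hright, add_zero]
  refine intervalIntegral.integral_congr fun t ht => ?_
  rw [uIcc_of_le hs.1] at ht
  simp only [max_eq_left (sub_nonneg.2 ht.2)]

theorem norm_mul_max_sub_zero_le {g : ℝ → ℝ} {c s t : ℝ} (hs : s ∈ Icc (-c) c)
    (ht : t ∈ Ioc (-c) c) : ‖g t * max (s - t) 0‖ ≤ ‖g t‖ * (2 * c) := by
  rw [norm_mul]
  gcongr
  rw [Real.norm_of_nonneg (le_max_right _ _)]
  exact max_le (by linarith [hs.2, ht.1]) (by linarith [ht.1, ht.2])

section CStarAlgebra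

variable {B : Type*} [CStarAlgebra B]

theorem IsSelfAdjoint.mul_mul_posPart_comm [IsReduced B] {b : B} (hb : IsSelfAdjoint b)
    (x : B) : b * x * b⁺ = b⁺ * x * b := by
  have h := sub_mul_mul_comm_of_mul_eq_zero (CFC.posPart_mul_negPart b)
    (CFC.negPart_mul_posPart b) x
  rwa [CFC.posPart_sub_negPart b] at h

theorem smul_posPart_sub_algebraMap {a : B} (ha : IsSelfAdjoint a) (r t : ℝ) :
    r • (a - algebraMap ℝ B t)⁺ = cfc (fun s => r * max (s - t) 0) a := by
  have h : a - algebraMap ℝ B t = cfc (fun s => s - t) a := by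
    rw [cfc_sub _ _, cfc_id' ℝ a, cfc_const t a]
  rw [cfc_const_mul r (fun s => max (s - t) 0) a, CFC.posPart_def, cfcₙ_eq_cfc, h,
    ← cfc_comp' _ _ (ha := ha)]
  rfl

theorem integrableOn_smul_posPart_sub_algebraMap {a : B} (ha : IsSelfAdjoint a) {c : ℝ}
    (hc : spectrum ℝ a ⊆ Icc (-c) c) {g : ℝ → ℝ} (hg : Continuous g) :
    IntegrableOn (fun t => g t • (a - algebraMap ℝ B t)⁺) (Ioc (-c) c) := by
  simp only [smul_posPart_sub_algebraMap ha]
  exact integrableOn_cfc measurableSet_Ioc _ (fun t => ‖g t‖ * (2 * c)) a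
    (Continuous.continuousOn (by fun_prop))
    (ae_restrict_of_forall_mem measurableSet_Ioc fun t ht s hs =>
      norm_mul_max_sub_zero_le (hc hs) ht)
    (by fun_prop : Continuous fun t => ‖g t‖ * (2 * c)).integrableOn_Ioc.hasFiniteIntegral

theorem setIntegral_smul_posPart_sub_algebraMap_eq_cfc {a : B} (ha : IsSelfAdjoint a) {c : ℝ}
    (hc : spectrum ℝ a ⊆ Icc (-c) c) {g : ℝ → ℝ} (hg : Continuous g) :
    ∫ t in Ioc (-c) c, g t • (a - algebraMap ℝ B t)⁺ =
      cfc (fun s => ∫ t in (-c)..s, g t * (s - t)) a := by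
  simp only [smul_posPart_sub_algebraMap ha]
  rw [← cfc_setIntegral measurableSet_Ioc _ (fun t => ‖g t‖ * (2 * c)) a
    (Continuous.continuousOn (by fun_prop))
    (ae_restrict_of_forall_mem measurableSet_Ioc fun t ht s hs =>
      norm_mul_max_sub_zero_le (hc hs) ht)
    (by fun_prop : Continuous fun t => ‖g t‖ * (2 * c)).integrableOn_Ioc.hasFiniteIntegral]
  exact cfc_congr fun s hs => setIntegral_mul_max_sub_zero hg (hc hs)

theorem setIntegral_posPart_sub_algebraMap {a : B} (ha : IsSelfAdjoint a) {c : ℝ}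
    (hc : spectrum ℝ a ⊆ Icc (-c) c) :
    ∫ t in Ioc (-c) c, (a - algebraMap ℝ B t)⁺ =
      (2⁻¹ : ℝ) • (a * a) + c • a + (c ^ 2 / 2) • 1 := by
  have h := setIntegral_smul_posPart_sub_algebraMap_eq_cfc ha hc (continuous_const (y := (1 : ℝ)))
  simp only [one_smul, one_mul] at h
  rw [h, cfc_congr (g := fun s => 2⁻¹ * (s * s) + c * s + c ^ 2 / 2) fun s _ => ?_]
  · rw [cfc_add_const .., cfc_add .., cfc_const_mul .., cfc_const_mul .., cfc_mul .., cfc_id' ℝ a,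
      Algebra.algebraMap_eq_smul_one]
  · simp only [intervalIntegral.integral_comp_sub_left (fun x => x), integral_id]
    ring

theorem setIntegral_smul_posPart_sub_algebraMap {a : B} (ha : IsSelfAdjoint a) {c : ℝ}
    (hc : spectrum ℝ a ⊆ Icc (-c) c) :
    ∫ t in Ioc (-c) c, t • (a - algebraMap ℝ B t)⁺ =
      (6⁻¹ : ℝ) • (a * a * a) - (c ^ 2 / 2) • a - (c ^ 3 / 3) • 1 := by
  rw [setIntegral_smul_posPart_sub_algebraMap_eq_cfc ha hc continuous_id',
    cfc_congr (g := fun s => 6⁻¹ * (s * s * s) - c ^ 2 / 2 * s - c ^ 3 / 3) fun s _ => ?_]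
  · rw [cfc_sub .., cfc_sub .., cfc_const_mul .., cfc_const_mul .., cfc_mul .., cfc_mul ..,
      cfc_id' ℝ a, cfc_const .., Algebra.algebraMap_eq_smul_one]
  · simp only [mul_sub, ← pow_two]
    rw [intervalIntegral.integral_sub (by apply Continuous.intervalIntegrable; fun_prop)
      (by apply Continuous.intervalIntegrable; fun_prop), intervalIntegral.integral_mul_const,
      integral_id, integral_pow]
    ring

theorem IsSelfAdjoint.lie_lie_lie_eq_zero [IsReduced B] {a : B} (ha : IsSelfAdjoint a) (x : B) :
    ⁅a, ⁅a, ⁅a, x⁆⁆⁆ = 0 := by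
  obtain ⟨c, hc⟩ := exists_spectrum_subset_Icc a
  let L₁ : B →L[ℝ] B :=
    ContinuousLinearMap.mul ℝ B (a * x) - (ContinuousLinearMap.mul ℝ B).flip (x * a)
  let L₂ : B →L[ℝ] B := ContinuousLinearMap.mul ℝ B x - (ContinuousLinearMap.mul ℝ B).flip x
  have hpointwise (t : ℝ) : L₁ (a - algebraMap ℝ B t)⁺ = L₂ (t • (a - algebraMap ℝ B t)⁺) := by
    have h := (ha.sub (.algebraMap B (.all t))).mul_mul_posPart_comm x
    simp only [L₁, L₂, sub_apply, ContinuousLinearMap.mul_apply', ContinuousLinearMap.flip_apply,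
      Algebra.algebraMap_eq_smul_one, sub_mul, mul_sub, smul_mul_assoc, mul_smul_comm, one_mul,
      mul_one, mul_assoc] at h ⊢
    rwa [sub_eq_sub_iff_sub_eq_sub] at h
  have hintegral : L₁ (∫ t in Ioc (-c) c, (a - algebraMap ℝ B t)⁺) =
      L₂ (∫ t in Ioc (-c) c, t • (a - algebraMap ℝ B t)⁺) := by
    rw [← L₁.integral_comp_comm (by simpa [IntegrableOn] using
        integrableOn_smul_posPart_sub_algebraMap ha hc (continuous_const (y := (1 : ℝ)))),
      ← L₂.integral_comp_comm (integrableOn_smul_posPart_sub_algebraMap ha hc continuous_id')]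
    exact integral_congr_ae (.of_forall hpointwise)
  rw [setIntegral_posPart_sub_algebraMap ha hc, setIntegral_smul_posPart_sub_algebraMap ha hc]
    at hintegral
  simp only [L₁, L₂, sub_apply, ContinuousLinearMap.mul_apply', ContinuousLinearMap.flip_apply,
    Ring.lie_def, mul_add, add_mul, mul_sub, sub_mul, smul_mul_assoc, mul_smul_comm, mul_one,
    one_mul, mul_assoc] at hintegral ⊢
  linear_combination (norm := module) (6 : ℝ) • hintegral

theorem IsSelfAdjoint.commute_of_isReduced [IsReduced B] {a : B} (ha : IsSelfAdjoint a)
    (y : B) : Commute a y := by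
  have : IsAddTorsionFree B := .of_isTorsionFree ℂ B
  let D : B →+ B := AddMonoidHom.mk' (⁅a, ·⁆) fun u v => by simp only [Ring.lie_def]; noncomm_ring
  have hD (u v : B) : D (u * v) = D u * v + u * D v := by
    simp only [D, AddMonoidHom.mk'_apply, Ring.lie_def]
    noncomm_ring
  have h := eq_zero_of_leibniz_of_iterate_two D hD
    (iterate_two_eq_zero_of_leibniz_of_iterate_three D hD ha.lie_lie_lie_eq_zero) y
  exact sub_eq_zero.1 h

theorem CStarAlgebra.commute_of_isReduced [IsReduced B] (x y : B) : Commute x y := by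
  rw [← realPart_add_I_smul_imaginaryPart x]
  exact ((ℜ x).2.commute_of_isReduced y).add_left
    (((ℑ x).2.commute_of_isReduced y).smul_left Complex.I)

end CStarAlgebra

theorem stmt_5 (A : Type*) [NonUnitalNormedRing A] [StarRing A] [CStarRing A]
    [NormedSpace ℂ A] [IsScalarTower ℂ A A] [SMulCommClass ℂ A A] [StarModule ℂ A]
    [CompleteSpace A]
    (hnc : ¬ ∀ a b : A, a * b = b * a) :
    ∃ x : A, x ≠ 0 ∧ x * x = 0 := by
  let _ : NonUnitalCStarAlgebra A := {}
  by_contra! hA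
  have : IsReduced (Unitization ℂ A) :=
    Unitization.isReduced fun z hz => not_imp_not.1 (hA z) hz
  refine hnc fun x y => Unitization.inr_injective (R := ℂ) ?_
  simpa only [Unitization.inr_mul] using
    (CStarAlgebra.commute_of_isReduced (x : Unitization ℂ A) y).eq
end

section
/- Let A be a C*-algebra with Jordan product x ∘ y = (xy + yx)/2, and suppose there exists γ > 0 such that ‖(x ∘ y) ∘ z‖ ≤ γ‖x ∘ (y ∘ z)‖ for all x, y, z ∈ A. Then A has no non-zero element a with a² = 0, and consequently A is commutative. -/
set_option maxHeartbeats 2000000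

namespace Stmt7Aux


variable {M δ : ℝ} {N : ℕ}

/-- grid point -/
noncomputable def tau (M δ : ℝ) (i : ℕ) : ℝ := -M + i * δ

/-- ramp function from 0 at `t` to 1 at `t + δ` -/
noncomputable def sfun (δ t : ℝ) (x : ℝ) : ℝ := max 0 (min 1 ((x - t)/δ))

/-- decreasing sequence of cutoffs -/
noncomputable def ufun (M δ : ℝ) (N : ℕ) (j : ℕ) (x : ℝ) : ℝ :=
  if j = 0 then 1 else if j < N then sfun δ (tau M δ (j-1)) x else 0

/-- the partition of unity -/
noncomputable def phi (M δ : ℝ) (N : ℕ) (i : ℕ) (x : ℝ) : ℝ :=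
  ufun M δ N i x - ufun M δ N (i+1) x

lemma tau_succ (i : ℕ) : tau M δ (i+1) = tau M δ i + δ := by
  simp [tau]; push_cast; ring

lemma tau_mono (hδ : 0 < δ) {i j : ℕ} (hij : i ≤ j) : tau M δ i ≤ tau M δ j := by
  have : (i:ℝ) ≤ j := by exact_mod_cast hij
  simp only [tau]
  nlinarith

lemma sfun_nonneg {t x : ℝ} : 0 ≤ sfun δ t x := le_max_left _ _

lemma sfun_le_one {t x : ℝ} : sfun δ t x ≤ 1 := by
  simp only [sfun, max_le_iff]
  constructor
  · norm_num
  · exact min_le_left _ _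

lemma sfun_anti (hδ : 0 < δ) {t t' x : ℝ} (h : t ≤ t') : sfun δ t' x ≤ sfun δ t x := by
  have : (x - t')/δ ≤ (x - t)/δ := by
    gcongr (?_ / δ)
    linarith
  exact max_le_max le_rfl (min_le_min le_rfl this)

lemma sfun_eq_zero (hδ : 0 < δ) {t x : ℝ} (h : x ≤ t) : sfun δ t x = 0 := by
  have : (x - t)/δ ≤ 0 := div_nonpos_of_nonpos_of_nonneg (by linarith) hδ.le
  simp only [sfun]
  rw [max_eq_left]
  exact (min_le_right _ _).trans this

lemma sfun_eq_one (hδ : 0 < δ) {t x : ℝ} (h : t + δ ≤ x) : sfun δ t x = 1 := by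
  have : (1:ℝ) ≤ (x - t)/δ := by
    rw [le_div_iff₀ hδ]; linarith
  simp only [sfun]
  rw [min_eq_left this, max_eq_right zero_le_one]

lemma lt_of_sfun_ne_zero (hδ : 0 < δ) {t x : ℝ} (h : sfun δ t x ≠ 0) : t < x := by
  by_contra hc
  exact h (sfun_eq_zero hδ (not_lt.mp hc))

lemma sfun_continuous (hδ : 0 < δ) (t : ℝ) : Continuous (sfun δ t) :=
  continuous_const.max (continuous_const.min ((continuous_id.sub continuous_const).div_const δ))

lemma ufun_nonneg {j : ℕ} {x : ℝ} : 0 ≤ ufun M δ N j x := by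
  unfold ufun; split_ifs
  · norm_num
  · exact sfun_nonneg
  · norm_num

lemma ufun_le_one {j : ℕ} {x : ℝ} : ufun M δ N j x ≤ 1 := by
  unfold ufun; split_ifs
  · norm_num
  · exact sfun_le_one
  · norm_num

lemma ufun_anti (hδ : 0 < δ) (j : ℕ) (x : ℝ) : ufun M δ N (j+1) x ≤ ufun M δ N j x := by
  unfold ufun
  by_cases h0 : j = 0
  · subst h0
    rw [if_pos rfl, if_neg (by omega : ¬ 0 + 1 = 0)]
    split_ifs
    · exact sfun_le_one
    · exact zero_le_one
  · rw [if_neg h0, if_neg (by omega : ¬ j + 1 = 0)]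
    by_cases hjN : j < N
    · rw [if_pos hjN]
      by_cases hj1N : j + 1 < N
      · rw [if_pos hj1N]
        have : j + 1 - 1 = j := by omega
        rw [this]
        exact sfun_anti hδ (tau_mono hδ (by omega))
      · rw [if_neg hj1N]; exact sfun_nonneg
    · rw [if_neg hjN, if_neg (by omega : ¬ j + 1 < N)]

lemma ufun_eq_one (hδ : 0 < δ) {j : ℕ} {x : ℝ} (hj : j < N) (hx : tau M δ j ≤ x) :
    ufun M δ N j x = 1 := by
  unfold ufun
  by_cases h0 : j = 0
  · rw [if_pos h0]
  · rw [if_neg h0, if_pos hj]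
    apply sfun_eq_one hδ
    rw [← tau_succ]
    have h1 : j - 1 + 1 = j := by omega
    rw [h1]; exact hx

lemma ufun_eq_zero (hδ : 0 < δ) {j : ℕ} {x : ℝ} (hj : j ≠ 0) (hx : x ≤ tau M δ (j-1)) :
    ufun M δ N j x = 0 := by
  unfold ufun
  rw [if_neg hj]
  split_ifs
  · exact sfun_eq_zero hδ hx
  · rfl

lemma phi_nonneg (hδ : 0 < δ) {i : ℕ} {x : ℝ} : 0 ≤ phi M δ N i x :=
  sub_nonneg.mpr (ufun_anti hδ i x)

lemma phi_le_one {i : ℕ} {x : ℝ} : phi M δ N i x ≤ 1 := by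
  have h1 : ufun M δ N i x ≤ 1 := ufun_le_one
  have h2 : 0 ≤ ufun M δ N (i+1) x := ufun_nonneg
  simp only [phi]; linarith

lemma phi_abs_le_one (hδ : 0 < δ) {i : ℕ} {x : ℝ} : |phi M δ N i x| ≤ 1 := by
  rw [abs_le]; exact ⟨by linarith [phi_nonneg (M := M) (N := N) hδ (i := i) (x := x)], phi_le_one⟩

lemma ufun_continuous (hδ : 0 < δ) (j : ℕ) : Continuous (ufun M δ N j) := by
  unfold ufun
  split_ifs
  · exact continuous_const
  · exact sfun_continuous hδ _
  · exact continuous_const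

lemma phi_continuous (hδ : 0 < δ) (i : ℕ) : Continuous (phi M δ N i) :=
  (ufun_continuous hδ i).sub (ufun_continuous hδ (i+1))

lemma phi_mul_eq_zero (hδ : 0 < δ) {i j : ℕ} (hij : i + 2 ≤ j) (hj : j < N) (x : ℝ) :
    phi M δ N i x * phi M δ N j x = 0 := by
  by_cases hx : x ≤ tau M δ (j-1)
  · have h1 : ufun M δ N j x = 0 := ufun_eq_zero hδ (by omega) hx
    have h2 : ufun M δ N (j+1) x = 0 :=
      ufun_eq_zero hδ (by omega) (by simpa using hx.trans (tau_mono hδ (by omega)))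
    simp [phi, h1, h2]
  · push_neg at hx
    have hx' : tau M δ (i+1) ≤ x := (tau_mono hδ (by omega)).trans hx.le
    have h1 : ufun M δ N (i+1) x = 1 := ufun_eq_one hδ (by omega) hx'
    have h2 : ufun M δ N i x = 1 := by
      rcases Nat.eq_zero_or_pos i with h | h
      · simp [ufun, h]
      · exact ufun_eq_one hδ (by omega) ((tau_mono hδ (by omega)).trans hx')
    simp [phi, h1, h2]

lemma phi_support (hδ : 0 < δ) {i : ℕ} {x : ℝ} (hi : i < N) (hiN : tau M δ (N-1) = M)
    (hx1 : -M ≤ x) (hx2 : x ≤ M) (hphi : phi M δ N i x ≠ 0) : |x - tau M δ i| ≤ δ := by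
  have hlow : tau M δ i - δ ≤ x := by
    rcases Nat.eq_zero_or_pos i with h | h
    · subst h; simp only [tau]; push_cast; linarith
    · by_contra hc
      push_neg at hc
      have hxle : x ≤ tau M δ (i-1) := by
        have : tau M δ (i-1) + δ = tau M δ i := by
          rw [← tau_succ]; congr 1; omega
        linarith
      have h1 : ufun M δ N i x = 0 := ufun_eq_zero hδ (by omega) hxle
      have h2 : ufun M δ N (i+1) x = 0 :=
        ufun_eq_zero hδ (by omega) (by simpa using hxle.trans (tau_mono hδ (by omega)))
      exact hphi (by simp [phi, h1, h2])
  have hhigh : x ≤ tau M δ i + δ := by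
    rcases eq_or_lt_of_le (Nat.succ_le_of_lt hi) with h | h
    · -- i + 1 = N, so tau i = M
      have : tau M δ i = M := by rw [← hiN]; congr 1; omega
      linarith
    · by_contra hc
      push_neg at hc
      rw [← tau_succ] at hc
      have h1 : ufun M δ N (i+1) x = 1 := ufun_eq_one hδ (by omega) hc.le
      have h2 : ufun M δ N i x = 1 := by
        rcases Nat.eq_zero_or_pos i with h' | h'
        · simp [ufun, h']
        · exact ufun_eq_one hδ (by omega) ((tau_mono hδ (by omega)).trans hc.le)
      exact hphi (by simp [phi, h1, h2])
  rw [abs_le]; constructor <;> linarith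

lemma phi_weight_bound (hδ : 0 < δ) {i : ℕ} {x : ℝ} (hi : i < N) (hiN : tau M δ (N-1) = M)
    (hx1 : -M ≤ x) (hx2 : x ≤ M) : |(x - tau M δ i) * phi M δ N i x| ≤ δ := by
  by_cases hphi : phi M δ N i x = 0
  · simp [hphi, hδ.le]
  · rw [abs_mul]
    calc |x - tau M δ i| * |phi M δ N i x| ≤ δ * 1 := by
          apply mul_le_mul (phi_support hδ hi hiN hx1 hx2 hphi) (phi_abs_le_one hδ)
            (abs_nonneg _) hδ.le
        _ = δ := mul_one δ

lemma phi_sum (hN : N ≠ 0) (x : ℝ) : ∑ i ∈ Finset.range N, phi M δ N i x = 1 := by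
  have : ∑ i ∈ Finset.range N, phi M δ N i x
      = ufun M δ N 0 x - ufun M δ N N x := Finset.sum_range_sub' (fun j => ufun M δ N j x) N
  rw [this]
  have h1 : ufun M δ N 0 x = 1 := by simp [ufun]
  have h2 : ufun M δ N N x = 0 := by simp [ufun, hN]
  rw [h1, h2, sub_zero]



variable {B : Type*} [CStarAlgebra B] [Nontrivial B] [PartialOrder B] [StarOrderedRing B]

lemma sq_le_smul (a : B) (ha : 0 ≤ a) {C : ℝ} (hC : ‖a‖ ≤ C) : a * a ≤ C • a := by
  have hsa : IsSelfAdjoint a := .of_nonneg ha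
  have h1 : a * a = cfc (fun x : ℝ => x * x) a := by
    rw [cfc_mul _ _ a, cfc_id' ℝ a]
  have h2 : C • a = cfc (fun x : ℝ => C * x) a := by
    rw [cfc_const_mul_id C a]
  rw [h1, h2]
  refine cfc_mono (fun x hx => ?_) (by fun_prop) (by fun_prop)
  have hx0 : 0 ≤ x := spectrum_nonneg_of_nonneg ha hx
  have hx1 : x ≤ C := by
    have := spectrum.norm_le_norm_of_mem hx
    rw [Real.norm_eq_abs] at this
    calc x ≤ |x| := le_abs_self x
      _ ≤ ‖a‖ := this
      _ ≤ C := hC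
  nlinarith

lemma norm_sum_le_of_orthogonal {ι : Type*} (s : Finset ι) (x : ι → B)
    (h1 : ∀ i ∈ s, ∀ j ∈ s, i ≠ j → star (x i) * x j = 0)
    (h2 : ∀ i ∈ s, ∀ j ∈ s, i ≠ j → x i * star (x j) = 0)
    {C : ℝ} (hC : 0 ≤ C) (hx : ∀ i ∈ s, ‖x i‖ ≤ C) :
    ‖∑ i ∈ s, x i‖ ≤ C := by
  set S := ∑ i ∈ s, x i with hS
  set T := ∑ i ∈ s, x i * star (x i) with hT
  have hSS : S * star S = T := by
    rw [hS, hT, star_sum, Finset.sum_mul_sum]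
    apply Finset.sum_congr rfl
    intro i hi
    apply Finset.sum_eq_single_of_mem i hi
    intro j hj hji
    exact h2 i hi j hj (fun h => hji (h.symm))
  have hTsa : IsSelfAdjoint T := by
    rw [hT]
    simp only [IsSelfAdjoint, star_sum, star_mul, star_star]
  have hT_nonneg : 0 ≤ T := Finset.sum_nonneg fun i _ => mul_star_self_nonneg _
  have hTsq : T * T = ∑ i ∈ s, (x i * star (x i)) * (x i * star (x i)) := by
    rw [hT, Finset.sum_mul_sum]
    apply Finset.sum_congr rfl
    intro i hi
    apply Finset.sum_eq_single_of_mem i hi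
    intro j hj hji
    have : star (x i) * x j = 0 := h1 i hi j hj (fun h => hji (h.symm))
    calc x i * star (x i) * (x j * star (x j))
        = x i * (star (x i) * x j) * star (x j) := by noncomm_ring
      _ = 0 := by rw [this]; simp
  have hTle : T * T ≤ (C^2) • T := by
    rw [hTsq, hT, Finset.smul_sum]
    apply Finset.sum_le_sum
    intro i hi
    apply sq_le_smul _ (mul_star_self_nonneg _)
    rw [CStarRing.norm_self_mul_star, pow_two]
    exact mul_le_mul (hx i hi) (hx i hi) (norm_nonneg _) hC
  have hTT_nonneg : 0 ≤ T * T := by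
    have := star_mul_self_nonneg T
    rwa [hTsa.star_eq] at this
  have h5 : ‖T‖ * ‖T‖ ≤ C^2 * ‖T‖ := by
    calc ‖T‖ * ‖T‖ = ‖star T * T‖ := (CStarRing.norm_star_mul_self).symm
      _ = ‖T * T‖ := by rw [hTsa.star_eq]
      _ ≤ ‖(C^2) • T‖ := CStarAlgebra.norm_le_norm_of_nonneg_of_le hTT_nonneg hTle
      _ = C^2 * ‖T‖ := by rw [norm_smul, Real.norm_eq_abs, abs_of_nonneg (sq_nonneg C)]
  have hTnorm : ‖T‖ ≤ C^2 := by
    rcases eq_or_lt_of_le (norm_nonneg T) with h | h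
    · rw [← h]; positivity
    · exact le_of_mul_le_mul_right (by linarith) h
  have h6 : ‖S‖ * ‖S‖ ≤ C * C := by
    calc ‖S‖ * ‖S‖ = ‖S * star S‖ := (CStarRing.norm_self_mul_star).symm
      _ = ‖T‖ := by rw [hSS]
      _ ≤ C^2 := hTnorm
      _ = C * C := sq C
  nlinarith [norm_nonneg S]


section Main

variable {A : Type*} [NonUnitalCStarAlgebra A]

local notation "UU" => Unitization ℂ A

noncomputable local instance : PartialOrder UU := CStarAlgebra.spectralOrder _
noncomputable local instance : StarOrderedRing UU := CStarAlgebra.spectralOrderedRing _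

lemma u_sq_zero (h0 : ∀ z : A, z * z = 0 → z = 0) (z : UU) (hz : z.fst = 0)
    (hzz : z * z = 0) : z = 0 := by
  have hz' : z = (z.snd : UU) := by
    conv_lhs => rw [← Unitization.inl_fst_add_inr_snd_eq z]
    rw [hz]; simp
  rw [hz'] at hzz ⊢
  rw [← Unitization.inr_mul] at hzz
  have h2 : ((z.snd * z.snd : A) : UU) = ((0 : A) : UU) := by
    rw [hzz]; simp
  have := Unitization.inr_injective h2
  rw [h0 _ this]; simp

lemma sandwich (h0 : ∀ z : A, z * z = 0 → z = 0) (x b y : UU)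
    (hfst : (x * b * y).fst = 0) (hyx : y * x = 0) : x * b * y = 0 := by
  apply u_sq_zero h0 _ hfst
  have : (x * b * y) * (x * b * y) = (x * b) * (y * x) * (b * y) := by
    simp only [mul_assoc]
  rw [this, hyx, mul_zero, zero_mul]

lemma sa_commute (h0 : ∀ z : A, z * z = 0 → z = 0) (H K : UU) (hH : H.fst = 0) (hK : K.fst = 0)
    (hHsa : IsSelfAdjoint H) (hKsa : IsSelfAdjoint K) : H * K = K * H := by
  by_cases hH0 : H = 0
  · simp [hH0]
  set M := ‖H‖ with hM
  have hMpos : 0 < M := norm_pos_iff.mpr hH0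
  -- the key quantitative bound
  have key : ∀ n : ℕ, 1 ≤ n → ‖H * K - K * H‖ ≤ 45 * (M / n) * ‖K‖ := by
    intro n hn
    have hnR : (0:ℝ) < n := by exact_mod_cast hn
    set δ := M / n with hδdef
    have hδ : 0 < δ := div_pos hMpos hnR
    set N := 2 * n + 1 with hNdef
    have hNne : N ≠ 0 := by omega
    have hτlast : tau M δ (N - 1) = M := by
      show -M + ((N - 1 : ℕ) : ℝ) * δ = M
      have h1 : ((N - 1 : ℕ) : ℝ) = 2 * n := by
        have : N - 1 = 2 * n := by omega
        rw [this]; push_cast; ring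
      rw [h1, hδdef]
      field_simp
      ring
    have hspec : ∀ x ∈ spectrum ℝ H, -M ≤ x ∧ x ≤ M := by
      intro x hx
      have := spectrum.norm_le_norm_of_mem hx
      rw [Real.norm_eq_abs] at this
      constructor
      · linarith [neg_abs_le x]
      · linarith [le_abs_self x]
    set p : ℕ → UU := fun i => cfc (phi M δ N i) H with hp
    have hpsa : ∀ i, IsSelfAdjoint (p i) := fun i => cfc_predicate _ _
    have hpnorm : ∀ i, ‖p i‖ ≤ 1 := by
      intro i
      simp only [hp]
      apply norm_cfc_le zero_le_one
      intro x _
      rw [Real.norm_eq_abs]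
      exact phi_abs_le_one hδ
    have hpsum : ∑ i ∈ Finset.range N, p i = 1 := by
      simp only [hp]
      rw [← cfc_sum _ H _ (fun i _ => (phi_continuous hδ i).continuousOn)]
      have h2 : cfc (∑ i ∈ Finset.range N, phi M δ N i) H = cfc (fun _ : ℝ => (1:ℝ)) H := by
        apply cfc_congr
        intro x _
        simp only [Finset.sum_apply]
        exact phi_sum hNne x
      rw [h2, cfc_const_one ℝ H]
    have hp0 : ∀ i j, i + 2 ≤ j → j < N → p i * p j = 0 ∧ p j * p i = 0 := by
      intro i j hij hj
      simp only [hp]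
      constructor
      · rw [← cfc_mul _ _ H ((phi_continuous hδ i).continuousOn)
          ((phi_continuous hδ j).continuousOn)]
        have h2 : cfc (fun x => phi M δ N i x * phi M δ N j x) H
            = cfc (fun _ : ℝ => (0:ℝ)) H := by
          apply cfc_congr
          intro x _
          exact phi_mul_eq_zero hδ hij hj x
        rw [h2, cfc_const_zero ℝ H]
      · rw [← cfc_mul _ _ H ((phi_continuous hδ j).continuousOn)
          ((phi_continuous hδ i).continuousOn)]
        have h2 : cfc (fun x => phi M δ N j x * phi M δ N i x) H
            = cfc (fun _ : ℝ => (0:ℝ)) H := by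
          apply cfc_congr
          intro x _
          exact (mul_comm _ _).trans (phi_mul_eq_zero hδ hij hj x)
        rw [h2, cfc_const_zero ℝ H]
    set r : ℕ → UU := fun i => cfc (fun x : ℝ => (x - tau M δ i) * phi M δ N i x) H with hr
    have hrnorm : ∀ i, i < N → ‖r i‖ ≤ δ := by
      intro i hi
      simp only [hr]
      apply norm_cfc_le hδ.le
      intro x hx
      rw [Real.norm_eq_abs]
      exact phi_weight_bound hδ hi hτlast (hspec x hx).1 (hspec x hx).2
    have hpH : ∀ i, p i * H = r i + (tau M δ i) • p i := by
      intro i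
      simp only [hp, hr]
      have hcφ : ContinuousOn (phi M δ N i) (spectrum ℝ H) := (phi_continuous hδ i).continuousOn
      have hcr : ContinuousOn (fun x : ℝ => (x - tau M δ i) * phi M δ N i x) (spectrum ℝ H) :=
        (((continuous_id.sub continuous_const).mul (phi_continuous hδ i))).continuousOn
      have hcc : ContinuousOn (fun x : ℝ => tau M δ i * phi M δ N i x) (spectrum ℝ H) :=
        ((continuous_const.mul (phi_continuous hδ i))).continuousOn
      calc cfc (phi M δ N i) H * H
          = cfc (phi M δ N i) H * cfc (fun x : ℝ => x) H := by rw [cfc_id' ℝ H]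
        _ = cfc (fun x : ℝ => phi M δ N i x * x) H := by
            rw [← cfc_mul _ _ H hcφ (continuousOn_id' _)]
        _ = cfc (fun x : ℝ => (x - tau M δ i) * phi M δ N i x + tau M δ i * phi M δ N i x) H :=
            cfc_congr (fun x _ => by ring)
        _ = cfc (fun x : ℝ => (x - tau M δ i) * phi M δ N i x) H
              + cfc (fun x : ℝ => tau M δ i * phi M δ N i x) H := cfc_add H _ _ hcr hcc
        _ = cfc (fun x : ℝ => (x - tau M δ i) * phi M δ N i x) H
              + tau M δ i • cfc (phi M δ N i) H := by rw [cfc_const_mul _ _ H hcφ]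
    have hHp : ∀ i, H * p i = p i * H := by
      intro i
      simp only [hp]
      have h2 := (cfc_commute_cfc (fun x : ℝ => x) (phi M δ N i) H)
      rw [cfc_id' ℝ H] at h2
      exact h2
    -- the commutator and its pieces
    set D := H * K - K * H with hD
    have hDstar : star D = -D := by
      rw [hD, star_sub, star_mul, star_mul, hHsa.star_eq, hKsa.star_eq, neg_sub]
    set q : ℕ × ℕ → UU := fun x => p x.1 * D * p x.2 with hq
    have six_zero : ∀ a b c d e f : UU, c * d = 0 → (a * b * c) * (d * e * f) = 0 := by
      intro a b c d e f h
      have : (a * b * c) * (d * e * f) = a * (b * ((c * d) * (e * f))) := by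
        simp only [mul_assoc]
      rw [this, h, zero_mul, mul_zero, mul_zero]
    have hqstar : ∀ x : ℕ × ℕ, star (q x) = p x.2 * star D * p x.1 := by
      intro x
      simp only [hq, star_mul, (hpsa _).star_eq, mul_assoc]
    have hfar : ∀ x : ℕ × ℕ, x.1 < N → x.2 < N → (x.1 + 2 ≤ x.2 ∨ x.2 + 2 ≤ x.1) →
        q x = 0 := by
      rintro ⟨i, j⟩ hi hj hcase
      have hji : p j * p i = 0 := by
        rcases hcase with h | h
        · exact (hp0 i j h hj).2
        · exact (hp0 j i h hi).1
      have h1 : (p i * H) * K * p j = 0 := by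
        apply sandwich h0
        · simp [Unitization.fst_mul, hH]
        · rw [← mul_assoc, hji, zero_mul]
      have h2 : p i * K * (H * p j) = 0 := by
        apply sandwich h0
        · simp [Unitization.fst_mul, hH]
        · rw [mul_assoc, hji, mul_zero]
      have h3 : q (i, j) = (p i * H) * K * p j - p i * K * (H * p j) := by
        simp only [hq, hD]
        noncomm_ring
      rw [h3, h1, h2, sub_zero]
    have hnear : ∀ x : ℕ × ℕ, x.1 < N → x.2 < N →
        |tau M δ x.1 - tau M δ x.2| ≤ δ → ‖q x‖ ≤ 3 * δ * ‖K‖ := by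
      rintro ⟨i, j⟩ hi hj hτ
      have hdecomp : q (i, j) = r i * (K * p j) - (p i * K) * r j
          + (tau M δ i - tau M δ j) • (p i * (K * p j)) := by
        have e1 : q (i, j) = (p i * H) * (K * p j) - (p i * K) * (H * p j) := by
          simp only [hq, hD]
          noncomm_ring
        rw [e1, hHp j, hpH i, hpH j]
        simp only [add_mul, mul_add, smul_mul_assoc, mul_smul_comm, sub_smul, mul_assoc]
        abel
      have n1 : ‖r i * (K * p j)‖ ≤ δ * ‖K‖ := by
        calc ‖r i * (K * p j)‖ ≤ ‖r i‖ * ‖K * p j‖ := norm_mul_le _ _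
          _ ≤ ‖r i‖ * (‖K‖ * ‖p j‖) := by
              gcongr
              exact norm_mul_le _ _
          _ ≤ δ * (‖K‖ * 1) := by
              have := hrnorm i hi
              have := hpnorm j
              gcongr
          _ = δ * ‖K‖ := by ring
      have n2 : ‖(p i * K) * r j‖ ≤ δ * ‖K‖ := by
        calc ‖(p i * K) * r j‖ ≤ ‖p i * K‖ * ‖r j‖ := norm_mul_le _ _
          _ ≤ (‖p i‖ * ‖K‖) * ‖r j‖ := by
              gcongr
              exact norm_mul_le _ _
          _ ≤ (1 * ‖K‖) * δ := by
              have := hrnorm j hj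
              have := hpnorm i
              gcongr
          _ = δ * ‖K‖ := by ring
      have n3 : ‖(tau M δ i - tau M δ j) • (p i * (K * p j))‖ ≤ δ * ‖K‖ := by
        rw [norm_smul, Real.norm_eq_abs]
        calc |tau M δ i - tau M δ j| * ‖p i * (K * p j)‖
            ≤ δ * (‖p i‖ * (‖K‖ * ‖p j‖)) := by
              gcongr
              calc ‖p i * (K * p j)‖ ≤ ‖p i‖ * ‖K * p j‖ := norm_mul_le _ _
                _ ≤ ‖p i‖ * (‖K‖ * ‖p j‖) := by gcongr; exact norm_mul_le _ _
          _ ≤ δ * (1 * (‖K‖ * 1)) := by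
              have := hpnorm i
              have := hpnorm j
              gcongr
          _ = δ * ‖K‖ := by ring
      calc ‖q (i, j)‖ = ‖r i * (K * p j) - (p i * K) * r j
            + (tau M δ i - tau M δ j) • (p i * (K * p j))‖ := by rw [hdecomp]
        _ ≤ ‖r i * (K * p j) - (p i * K) * r j‖
            + ‖(tau M δ i - tau M δ j) • (p i * (K * p j))‖ := norm_add_le _ _
        _ ≤ (‖r i * (K * p j)‖ + ‖(p i * K) * r j‖)
            + ‖(tau M δ i - tau M δ j) • (p i * (K * p j))‖ := by
            gcongr
            exact norm_sub_le _ _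
        _ ≤ (δ * ‖K‖ + δ * ‖K‖) + δ * ‖K‖ := by gcongr
        _ = 3 * δ * ‖K‖ := by ring
    have hDsum : D = ∑ x ∈ Finset.range N ×ˢ Finset.range N, q x := by
      calc D = (∑ i ∈ Finset.range N, p i) * D * (∑ j ∈ Finset.range N, p j) := by
            rw [hpsum, one_mul, mul_one]
        _ = (∑ i ∈ Finset.range N, p i * D) * (∑ j ∈ Finset.range N, p j) := by
            rw [Finset.sum_mul]
        _ = ∑ i ∈ Finset.range N, ∑ j ∈ Finset.range N, (p i * D) * p j :=
            Finset.sum_mul_sum _ _ _ _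
        _ = ∑ x ∈ Finset.range N ×ˢ Finset.range N, q x := by
            rw [← Finset.sum_product']
    set κ : ℕ × ℕ → ℕ × ℕ := fun x => (x.1 % 3, min (x.2 + 2 - x.1) 4) with hκ
    have hmaps : ∀ x ∈ Finset.range N ×ˢ Finset.range N, κ x ∈ Finset.range 3 ×ˢ Finset.range 5 := by
      intro x _
      simp only [hκ, Finset.mem_product, Finset.mem_range]
      omega
    have hfib := Finset.sum_fiberwise_of_maps_to hmaps q
    have hDle : ‖D‖ ≤ ∑ y ∈ Finset.range 3 ×ˢ Finset.range 5,
        ‖∑ x ∈ (Finset.range N ×ˢ Finset.range N).filter (fun x => κ x = y), q x‖ := by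
      rw [hDsum, ← hfib]
      exact norm_sum_le _ _
    have hfibbound : ∀ y ∈ Finset.range 3 ×ˢ Finset.range 5,
        ‖∑ x ∈ (Finset.range N ×ˢ Finset.range N).filter (fun x => κ x = y), q x‖
          ≤ 3 * δ * ‖K‖ := by
      intro y hy
      have hmem : ∀ x ∈ (Finset.range N ×ˢ Finset.range N).filter (fun x => κ x = y),
          x.1 < N ∧ x.2 < N ∧ x.1 % 3 = y.1 ∧ min (x.2 + 2 - x.1) 4 = y.2 := by
        intro x hx
        simp only [Finset.mem_filter, Finset.mem_product, Finset.mem_range, hκ,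
          Prod.ext_iff] at hx
        tauto
      have hCnn : (0:ℝ) ≤ 3 * δ * ‖K‖ := by positivity
      by_cases hy2 : y.2 = 0 ∨ y.2 = 4
      · have hz : ∀ x ∈ (Finset.range N ×ˢ Finset.range N).filter (fun x => κ x = y),
            q x = 0 := by
          intro x hx
          obtain ⟨hx1, hx2, _, hxy⟩ := hmem x hx
          apply hfar x hx1 hx2
          omega
        rw [Finset.sum_eq_zero hz, norm_zero]
        exact hCnn
      · push_neg at hy2
        have hy25 : y.2 < 5 := by
          simp only [Finset.mem_product, Finset.mem_range] at hy
          exact hy.2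
        apply norm_sum_le_of_orthogonal _ q ?_ ?_ hCnn ?_
        · -- star (q x) * q x' = 0
          intro x hx x' hx' hne
          obtain ⟨hx1, hx2, hxm, hxy⟩ := hmem x hx
          obtain ⟨hx1', hx2', hxm', hxy'⟩ := hmem x' hx'
          have hone : x.1 ≠ x'.1 := by
            intro hc
            apply hne
            have : x.2 = x'.2 := by omega
            exact Prod.ext hc this
          have hfar1 : p x.1 * p x'.1 = 0 := by
            rcases (by omega : x.1 + 2 ≤ x'.1 ∨ x'.1 + 2 ≤ x.1) with h | h
            · exact (hp0 _ _ h hx1').1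
            · exact (hp0 _ _ h hx1).2
          rw [hqstar]
          simp only [hq]
          exact six_zero _ _ _ _ _ _ hfar1
        · -- q x * star (q x') = 0
          intro x hx x' hx' hne
          obtain ⟨hx1, hx2, hxm, hxy⟩ := hmem x hx
          obtain ⟨hx1', hx2', hxm', hxy'⟩ := hmem x' hx'
          have hone : x.2 ≠ x'.2 := by
            intro hc
            apply hne
            have : x.1 = x'.1 := by omega
            exact Prod.ext this hc
          have hfar2 : p x.2 * p x'.2 = 0 := by
            rcases (by omega : x.2 + 2 ≤ x'.2 ∨ x'.2 + 2 ≤ x.2) with h | h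
            · exact (hp0 _ _ h hx2').1
            · exact (hp0 _ _ h hx2).2
          rw [hqstar]
          simp only [hq]
          exact six_zero _ _ _ _ _ _ hfar2
        · -- norm bound on each term
          intro x hx
          obtain ⟨hx1, hx2, _, hxy⟩ := hmem x hx
          apply hnear x hx1 hx2
          have hrel : (x.1 : ℤ) - x.2 = (2 : ℤ) - y.2 := by omega
          have habs : |(x.1 : ℝ) - x.2| ≤ 1 := by
            have h1 : ((x.1 : ℤ) : ℝ) - ((x.2 : ℤ) : ℝ) = (((x.1 : ℤ) - x.2 : ℤ) : ℝ) := by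
              push_cast; ring
            have h2 : |(x.1 : ℤ) - x.2| ≤ 1 := by
              rw [abs_le]; constructor <;> omega
            calc |(x.1 : ℝ) - x.2| = |(((x.1 : ℤ) - x.2 : ℤ) : ℝ)| := by
                  rw [← h1]; norm_cast
              _ = |((x.1 : ℤ) - x.2 : ℤ)| := by rw [Int.cast_abs]
              _ ≤ 1 := by exact_mod_cast h2
          have hτeq : tau M δ x.1 - tau M δ x.2 = ((x.1 : ℝ) - x.2) * δ := by
            simp only [tau]; ring
          rw [hτeq, abs_mul, abs_of_pos hδ]
          calc |(x.1 : ℝ) - x.2| * δ ≤ 1 * δ := by gcongr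
            _ = δ := one_mul δ
    calc ‖H * K - K * H‖ = ‖D‖ := by rw [hD]
      _ ≤ ∑ y ∈ Finset.range 3 ×ˢ Finset.range 5,
          ‖∑ x ∈ (Finset.range N ×ˢ Finset.range N).filter (fun x => κ x = y), q x‖ := hDle
      _ ≤ ∑ _y ∈ Finset.range 3 ×ˢ Finset.range 5, 3 * δ * ‖K‖ :=
          Finset.sum_le_sum hfibbound
      _ = 15 * (3 * δ * ‖K‖) := by
          rw [Finset.sum_const]
          simp [Finset.card_product]
      _ = 45 * δ * ‖K‖ := by ring
      _ = 45 * (M / n) * ‖K‖ := by rw [hδdef]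
  -- pass to the limit
  have lim : Filter.Tendsto (fun n : ℕ => 45 * (M / n) * ‖K‖) Filter.atTop (nhds 0) := by
    have h1 := (tendsto_const_div_atTop_nhds_zero_nat M).const_mul 45
    have h2 := h1.mul_const ‖K‖
    simpa using h2
  have hle : ‖H * K - K * H‖ ≤ 0 := by
    apply ge_of_tendsto lim
    filter_upwards [Filter.eventually_ge_atTop 1] with n hn
    exact key n hn
  have := le_antisymm hle (norm_nonneg _)
  rwa [norm_eq_zero, sub_eq_zero] at this

lemma sa_commute_A (h0 : ∀ z : A, z * z = 0 → z = 0) (x y : A)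
    (hx : IsSelfAdjoint x) (hy : IsSelfAdjoint y) : x * y = y * x := by
  have h := sa_commute h0 (x : UU) (y : UU) (Unitization.fst_inr ℂ x) (Unitization.fst_inr ℂ y)
    (hx.inr ℂ) (hy.inr ℂ)
  rw [← Unitization.inr_mul, ← Unitization.inr_mul] at h
  exact Unitization.inr_injective h

lemma smul_cancel_comm (c : ℂ) (hc : c ≠ 0) (u v : A)
    (h : (c • u) * v = v * (c • u)) : u * v = v * u := by
  rw [smul_mul_assoc, mul_smul_comm] at h
  exact smul_right_injective A hc h

lemma commute_all (h0 : ∀ z : A, z * z = 0 → z = 0) (a b : A) : a * b = b * a := by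
  have hsa : ∀ u v : A, IsSelfAdjoint u → IsSelfAdjoint v → u * v = v * u := sa_commute_A h0
  have hpa : IsSelfAdjoint (a + star a) := by
    rw [IsSelfAdjoint, star_add, star_star, add_comm]
  have hpb : IsSelfAdjoint (b + star b) := by
    rw [IsSelfAdjoint, star_add, star_star, add_comm]
  have hqa : IsSelfAdjoint (Complex.I • (a - star a)) := by
    rw [IsSelfAdjoint, star_smul, star_sub, star_star, Complex.star_def, Complex.conj_I,
      neg_smul, smul_sub, smul_sub]
    abel
  have hqb : IsSelfAdjoint (Complex.I • (b - star b)) := by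
    rw [IsSelfAdjoint, star_smul, star_sub, star_star, Complex.star_def, Complex.conj_I,
      neg_smul, smul_sub, smul_sub]
    abel
  have E1 : (a + star a) * (b + star b) = (b + star b) * (a + star a) := hsa _ _ hpa hpb
  have E2 : (a + star a) * (b - star b) = (b - star b) * (a + star a) := by
    have h := hsa _ _ hpa hqb
    rw [mul_smul_comm, smul_mul_assoc] at h
    exact smul_right_injective A Complex.I_ne_zero h
  have E3 : (a - star a) * (b + star b) = (b + star b) * (a - star a) := by
    have h := hsa _ _ hqa hpb
    rw [smul_mul_assoc, mul_smul_comm] at h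
    exact smul_right_injective A Complex.I_ne_zero h
  have E4 : (a - star a) * (b - star b) = (b - star b) * (a - star a) := by
    have h := hsa _ _ hqa hqb
    rw [smul_mul_assoc, mul_smul_comm, smul_mul_assoc, mul_smul_comm] at h
    exact smul_right_injective A Complex.I_ne_zero (smul_right_injective A Complex.I_ne_zero h)
  have hb2 : (b + star b) + (b - star b) = (2:ℂ) • b := by
    rw [two_smul]; abel
  have F1 : (a + star a) * b = b * (a + star a) := by
    have key : (a + star a) * ((b + star b) + (b - star b))
        = ((b + star b) + (b - star b)) * (a + star a) := by
      rw [mul_add, E1, E2, ← add_mul]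
    rw [hb2, mul_smul_comm, smul_mul_assoc] at key
    exact smul_right_injective A two_ne_zero key
  have F2 : (a - star a) * b = b * (a - star a) := by
    have key : (a - star a) * ((b + star b) + (b - star b))
        = ((b + star b) + (b - star b)) * (a - star a) := by
      rw [mul_add, E3, E4, ← add_mul]
    rw [hb2, mul_smul_comm, smul_mul_assoc] at key
    exact smul_right_injective A two_ne_zero key
  have ha2 : (a + star a) + (a - star a) = (2:ℂ) • a := by
    rw [two_smul]; abel
  have key2 : ((a + star a) + (a - star a)) * b = b * ((a + star a) + (a - star a)) := by
    rw [add_mul, F1, F2, ← mul_add]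
  rw [ha2, smul_mul_assoc, mul_smul_comm] at key2
  exact smul_right_injective A two_ne_zero key2

end Main

end Stmt7Aux


theorem stmt_7 (A : Type*) [NonUnitalNormedRing A] [StarRing A] [CStarRing A]
    [NormedSpace ℂ A] [IsScalarTower ℂ A A] [SMulCommClass ℂ A A] [StarModule ℂ A]
    [CompleteSpace A]
    (jp : A → A → A) (hjp : ∀ x y, jp x y = (1/2 : ℂ) • (x * y + y * x))
    (γ : ℝ) (hγ : 0 < γ)
    (hLP : ∀ x y z : A, ‖jp (jp x y) z‖ ≤ γ * ‖jp x (jp y z)‖) :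
    (¬ ∃ a : A, a ≠ 0 ∧ a * a = 0) ∧ (∀ a b : A, a * b = b * a) := by
  letI : NonUnitalCStarAlgebra A :=
    { ‹NonUnitalNormedRing A›, ‹StarRing A›, ‹CStarRing A›, ‹NormedSpace ℂ A›,
      ‹IsScalarTower ℂ A A›, ‹SMulCommClass ℂ A A›, ‹StarModule ℂ A›, ‹CompleteSpace A› with }
  have h0 : ∀ z : A, z * z = 0 → z = 0 := by
    intro a haa
    have h2 : jp a a = 0 := by rw [hjp, haa]; simp
    have h3 : jp (star a) (jp a a) = 0 := by rw [h2, hjp]; simp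
    have h1 := hLP (star a) a a
    rw [h3, norm_zero, mul_zero] at h1
    have hzero : jp (jp (star a) a) a = 0 := norm_le_zero_iff.mp h1
    have h4 : a * (a * star a) = 0 := by rw [← mul_assoc, haa, zero_mul]
    have h5 : star a * (a * a) = 0 := by rw [haa, mul_zero]
    have hexp : jp (jp (star a) a) a = (1/2:ℂ) • (a * (star a * a)) := by
      simp only [hjp, smul_add, add_mul, mul_add, smul_mul_assoc, mul_smul_comm, mul_assoc,
        h4, h5]
      module
    rw [hexp] at hzero
    have h6 : a * (star a * a) = 0 := by
      rcases smul_eq_zero.mp hzero with h | h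
      · norm_num at h
      · exact h
    have h7 : (a * star a) * (a * star a) = 0 := by
      have e : (a * star a) * (a * star a) = (a * (star a * a)) * star a := by
        simp only [mul_assoc]
      rw [e, h6, zero_mul]
    have hsa : star (a * star a) = a * star a := by rw [star_mul, star_star]
    have h8 : ‖a * star a‖ * ‖a * star a‖ = 0 := by
      rw [← CStarRing.norm_star_mul_self, hsa, h7, norm_zero]
    have h9 : a * star a = 0 := norm_eq_zero.mp (mul_self_eq_zero.mp h8)
    have h10 : ‖a‖ * ‖a‖ = 0 := by rw [← CStarRing.norm_self_mul_star, h9, norm_zero]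
    exact norm_eq_zero.mp (mul_self_eq_zero.mp h10)
  constructor
  · rintro ⟨a, ha, haa⟩
    exact ha (h0 a haa)
  · exact Stmt7Aux.commute_all h0
end

section
/- Let A be a C*-algebra, let a ∈ A with a ≥ 0 and let b ∈ A be self-adjoint. Then ‖a ∘ b‖² ≤ ‖a‖ · ‖b a b‖, where a ∘ b = (ab + ba)/2. -/
/-!
With `x = a * b + b * a` self-adjoint, `‖x‖² = ‖x * x‖` and
`x * x = (a * (b * a * b) + (b * a * b) * a) + ((a * b) * (b * a) + (b * a) * (a * b))`.
The first bracket has norm at most `2 ‖a‖ ‖b a b‖`. For the second, `‖b a‖ = ‖a b‖`, and writing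
`a = √a √a` gives `‖a b‖² ≤ ‖√a‖² ‖√a b‖² = ‖a‖ ‖b a b‖` by the C*-identity. Altogether
`‖x‖² ≤ 4 ‖a‖ ‖b a b‖`.
-/

section CStarRing

variable {A : Type*} [NonUnitalNormedRing A] [StarRing A] [CStarRing A]

lemma IsSelfAdjoint.norm_mul_comm {a b : A} (ha : IsSelfAdjoint a) (hb : IsSelfAdjoint b) :
    ‖b * a‖ = ‖a * b‖ := by
  rw [← norm_star (b * a), star_mul, ha.star_eq, hb.star_eq]

lemma IsSelfAdjoint.norm_mul_add_mul_sq_le {a b : A} (ha : IsSelfAdjoint a)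
    (hb : IsSelfAdjoint b) :
    ‖a * b + b * a‖ ^ 2 ≤ 2 * (‖a‖ * ‖b * a * b‖) + 2 * ‖a * b‖ ^ 2 := by
  set m := b * a * b
  have hx : IsSelfAdjoint (a * b + b * a) := by
    simp only [IsSelfAdjoint, star_add, star_mul, ha.star_eq, hb.star_eq, add_comm]
  have hsq : (a * b + b * a) * (a * b + b * a) =
      (a * m + m * a) + ((a * b) * (b * a) + (b * a) * (a * b)) := by
    simp only [m]
    noncomm_ring
  have hcross : ‖(a * b) * (b * a) + (b * a) * (a * b)‖ ≤ 2 * ‖a * b‖ ^ 2 := by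
    calc _ ≤ ‖a * b‖ * ‖b * a‖ + ‖b * a‖ * ‖a * b‖ :=
          (norm_add_le _ _).trans (add_le_add (norm_mul_le _ _) (norm_mul_le _ _))
      _ = 2 * ‖a * b‖ ^ 2 := by rw [ha.norm_mul_comm hb]; ring
  calc ‖a * b + b * a‖ ^ 2 = ‖(a * b + b * a) * (a * b + b * a)‖ := by
        rw [hx.norm_mul_self, sq]
    _ ≤ ‖a * m + m * a‖ + ‖(a * b) * (b * a) + (b * a) * (a * b)‖ := by
        rw [hsq]; exact norm_add_le _ _
    _ ≤ (‖a‖ * ‖m‖ + ‖m‖ * ‖a‖) + 2 * ‖a * b‖ ^ 2 :=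
        add_le_add ((norm_add_le _ _).trans (add_le_add (norm_mul_le _ _) (norm_mul_le _ _)))
          hcross
    _ = 2 * (‖a‖ * ‖m‖) + 2 * ‖a * b‖ ^ 2 := by ring

end CStarRing

lemma norm_mul_sq_le_norm_mul_norm_star_mul_mul {A : Type*} [NonUnitalCStarAlgebra A]
    [PartialOrder A] [StarOrderedRing A] {a : A} (b : A) (ha : 0 ≤ a) :
    ‖a * b‖ ^ 2 ≤ ‖a‖ * ‖star b * a * b‖ := by
  have hsqrt : ‖CFC.sqrt a‖ ^ 2 = ‖a‖ := by
    rw [CFC.norm_sqrt a ha, Real.sq_sqrt (norm_nonneg a)]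
  calc ‖a * b‖ ^ 2 = ‖CFC.sqrt a * (CFC.sqrt a * b)‖ ^ 2 := by
        rw [← mul_assoc, CFC.sqrt_mul_sqrt_self a ha]
    _ ≤ (‖CFC.sqrt a‖ * ‖CFC.sqrt a * b‖) ^ 2 := by gcongr; exact norm_mul_le _ _
    _ = ‖a‖ * ‖star b * a * b‖ := by
        rw [mul_pow, hsqrt, CFC.norm_star_mul_mul_self_of_nonneg b ha]

theorem stmt_8 (A : Type*) [NonUnitalNormedRing A] [StarRing A] [CStarRing A]
    [NormedSpace ℂ A] [IsScalarTower ℂ A A] [SMulCommClass ℂ A A] [StarModule ℂ A]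
    [CompleteSpace A] [PartialOrder A] [StarOrderedRing A]
    (a b : A) (ha : 0 ≤ a) (hb : IsSelfAdjoint b) :
    ‖(1/2 : ℂ) • (a * b + b * a)‖ ^ 2 ≤ ‖a‖ * ‖b * a * b‖ := by
  let _ : NonUnitalCStarAlgebra A := { }
  have hjordan := ha.isSelfAdjoint.norm_mul_add_mul_sq_le hb
  have hab : ‖a * b‖ ^ 2 ≤ ‖a‖ * ‖b * a * b‖ := by
    simpa only [hb.star_eq] using norm_mul_sq_le_norm_mul_norm_star_mul_mul b ha
  have hhalf : ‖(1/2 : ℂ) • (a * b + b * a)‖ = ‖a * b + b * a‖ / 2 := by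
    rw [norm_smul]; norm_num; ring
  rw [hhalf, div_pow]
  linarith
end

section
/- Let H be a complex Hilbert space with triple product {x, y, z} = (1/2)(⟨x, y⟩ z + ⟨z, y⟩ x), and let h, k ∈ H be orthonormal vectors. Then {h, k, {k, h, h}} = (1/4) h ≠ 0 while {k, h, {h, k, h}} = 0. Consequently, if dim H ≥ 2, there is no constant γ > 0 satisfying ‖{a, b, {x, y, z}}‖ ≤ γ‖{x, y, {a, b, z}}‖ for all a, b, x, y, z ∈ H. -/
/-- The rank-one Cartan factor triple product on a complex Hilbert space,
written with an inner product `⟨x, y⟩ := inner y x` that is linear in the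
first variable and conjugate-linear in the second:
`{x, y, z} = (1/2)(⟨x, y⟩ z + ⟨z, y⟩ x)`. -/
noncomputable def trip {H : Type*} [NormedAddCommGroup H] [InnerProductSpace ℂ H]
    (x y z : H) : H :=
  (1/2 : ℂ) • ((inner ℂ y x : ℂ) • z + (inner ℂ y z : ℂ) • x)

/-! For orthonormal `h, k` one has `{k, h, h} = k/2`, so `{h, k, {k, h, h}} = h/4`, whereas
`{h, k, h} = 0` already; taking `(a, b, x, y, z) = (h, k, k, h, h)` makes the left side of the
proposed bound nonzero and the right side zero. -/

section TripleProduct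

variable {H : Type*} [NormedAddCommGroup H] [InnerProductSpace ℂ H]

theorem trip_of_inner_eq_zero {x y : H} (hxy : inner ℂ y x = 0) (z : H) :
    trip x y z = ((1/2 : ℂ) * inner ℂ y z) • x := by
  rw [trip, hxy, zero_smul, zero_add, smul_smul]

theorem trip_zero_right (x y : H) : trip x y 0 = 0 := by
  simp [trip]

end TripleProduct

theorem stmt_13_general (H : Type*) [NormedAddCommGroup H] [InnerProductSpace ℂ H]
    (h k : H) (hh : ‖h‖ = 1) (hk : ‖k‖ = 1)
    (hhk : (inner ℂ k h : ℂ) = 0) :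
    trip h k (trip k h h) = (1/4 : ℂ) • h ∧ (1/4 : ℂ) • h ≠ 0 ∧
    trip k h (trip h k h) = 0 ∧
    ¬ ∃ γ : ℝ, 0 < γ ∧ ∀ a b x y z : H,
        ‖trip a b (trip x y z)‖ ≤ γ * ‖trip x y (trip a b z)‖ := by
  have hkh : inner ℂ h k = 0 := inner_eq_zero_symm.mp hhk
  have hkhh : trip k h h = (1/2 : ℂ) • k := by
    rw [trip_of_inner_eq_zero hkh, inner_self_eq_one_of_norm_eq_one hh, mul_one]
  have hhk_kh : trip h k (trip k h h) = (1/4 : ℂ) • h := by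
    rw [hkhh, trip_of_inner_eq_zero hhk, inner_smul_right, inner_self_eq_one_of_norm_eq_one hk]
    norm_num
  have hkh_hkh : trip k h (trip h k h) = 0 := by
    rw [trip_of_inner_eq_zero hhk, hhk, mul_zero, zero_smul, trip_zero_right]
  have hne : (1/4 : ℂ) • h ≠ 0 :=
    smul_ne_zero (by norm_num) (norm_ne_zero_iff.mp (by rw [hh]; exact one_ne_zero))
  refine ⟨hhk_kh, hne, hkh_hkh, ?_⟩
  rintro ⟨γ, -, hbound⟩
  have := hbound h k k h h
  rw [hhk_kh, hkh_hkh, norm_zero, mul_zero] at this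
  exact hne (norm_le_zero_iff.mp this)

theorem stmt_13 (H : Type*) [NormedAddCommGroup H] [InnerProductSpace ℂ H]
    [CompleteSpace H] (h k : H) (hh : ‖h‖ = 1) (hk : ‖k‖ = 1)
    (hhk : (inner ℂ k h : ℂ) = 0) :
    trip h k (trip k h h) = (1/4 : ℂ) • h ∧ (1/4 : ℂ) • h ≠ 0 ∧
    trip k h (trip h k h) = 0 ∧
    ¬ ∃ γ : ℝ, 0 < γ ∧ ∀ a b x y z : H,
        ‖trip a b (trip x y z)‖ ≤ γ * ‖trip x y (trip a b z)‖ :=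
  stmt_13_general H h k hh hk hhk
end

section
/- (Le Page–Kaplansky for C*-algebras) Let A be a C*-algebra. Then A is commutative if and only if there exists γ > 0 such that ‖ab‖ ≤ γ‖ba‖ for all a, b ∈ A. -/
/-!
Le Page's argument. Multiplying by an approximate unit, the inequality `‖x * y‖ ≤ γ * ‖y * x‖`
extends to `x ∈ A` and `y` in the unitization `A⁺¹`. For `a b ∈ A` the entire function
`z ↦ exp (z • a) * b * exp (-(z • a))` is therefore bounded by `γ * ‖b‖` (move the last factor to
the front, where it cancels `exp (z • a)`), hence constant by Liouville's theorem, and its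
derivative `a * b - b * a` at `0` vanishes.
-/

open Filter Topology NormedSpace Bornology

theorem exp_neg_mul_exp {B : Type*} [NormedRing B] [NormedAlgebra ℂ B] [CompleteSpace B] (x : B) :
    exp (-x) * exp x = 1 := by
  let _ : NormedAlgebra ℚ B := NormedAlgebra.restrictScalars ℚ ℂ B
  rw [← exp_add_of_commute (Commute.refl x).neg_left, neg_add_cancel, exp_zero]

theorem commute_of_forall_norm_exp_smul_conj_le {B : Type*} [NormedRing B]
    [NormedAlgebra ℂ B] [CompleteSpace B] {a b : B} {C : ℝ}
    (h : ∀ z : ℂ, ‖exp (z • a) * b * exp (-(z • a))‖ ≤ C) : Commute a b := by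
  set F : ℂ → B := fun z => exp (z • a) * b * exp (z • -a)
  have hF : ∀ z, HasDerivAt F
      (exp (z • a) * a * b * exp (z • -a) + exp (z • a) * b * (exp (z • -a) * -a)) z :=
    fun z => ((hasDerivAt_exp_smul_const a z).mul_const b).mul (hasDerivAt_exp_smul_const (-a) z)
  have hbdd : IsBounded (Set.range F) := isBounded_iff_forall_norm_le.2
    ⟨C, by rintro _ ⟨z, rfl⟩; simpa only [F, smul_neg] using h z⟩
  obtain ⟨c, hc⟩ :=
    Differentiable.exists_eq_const_of_bounded (fun z => (hF z).differentiableAt) hbdd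
  have hderiv := (hF 0).unique (by rw [hc]; exact hasDerivAt_const 0 c)
  simp only [zero_smul, exp_zero, one_mul, mul_one, mul_neg] at hderiv
  exact add_neg_eq_zero.mp hderiv

section ApproximateUnit

variable {𝕜 A : Type*} [NormedField 𝕜] [NonUnitalNormedRing A] [NormedSpace 𝕜 A]
  [IsScalarTower 𝕜 A A] [SMulCommClass 𝕜 A A] {l : Filter A} {γ : ℝ}

theorem norm_smul_add_mul_le_of_isApproximateUnit (hl : l.IsApproximateUnit)
    (h : ∀ a b : A, ‖a * b‖ ≤ γ * ‖b * a‖) (r : 𝕜) (x u : A) :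
    ‖r • x + x * u‖ ≤ γ * ‖r • x + u * x‖ := by
  have := hl.neBot
  have hleft : Tendsto (fun e => ‖(r • x + x * u) * e‖) l (𝓝 ‖r • x + x * u‖) :=
    (hl.tendsto_mul_left _).norm
  have hright : Tendsto (fun e => γ * ‖r • (e * x) + u * (e * x)‖) l
      (𝓝 (γ * ‖r • x + u * x‖)) := by
    have hex := hl.tendsto_mul_right x
    exact ((hex.const_smul r).add (hex.const_mul u)).norm.const_mul γ
  refine le_of_tendsto_of_tendsto' hleft hright fun e => ?_
  calc ‖(r • x + x * u) * e‖ = ‖x * (r • e + u * e)‖ := by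
        rw [add_mul, mul_add, smul_mul_assoc, mul_smul_comm, mul_assoc]
    _ ≤ γ * ‖(r • e + u * e) * x‖ := h _ _
    _ = γ * ‖r • (e * x) + u * (e * x)‖ := by rw [add_mul, smul_mul_assoc, mul_assoc]

end ApproximateUnit

namespace Unitization

variable {R A : Type*} [Semiring R] [NonUnitalNonAssocSemiring A] [Module R A]

theorem inr_mul_eq_inr (x : A) (m : Unitization R A) :
    (x : Unitization R A) * m = ((m.fst • x + x * m.snd : A) : Unitization R A) := by
  ext <;> simp

theorem mul_inr_eq_inr (x : A) (m : Unitization R A) :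
    m * (x : Unitization R A) = ((m.fst • x + m.snd * x : A) : Unitization R A) := by
  ext <;> simp

end Unitization

section LePage

variable {A : Type*} [NonUnitalNormedRing A] [NormedSpace ℂ A] [IsScalarTower ℂ A A]
  [SMulCommClass ℂ A A] [RegularNormedAlgebra ℂ A] {l : Filter A} {γ : ℝ}

theorem Unitization.norm_inr_mul_le_of_isApproximateUnit (hl : l.IsApproximateUnit)
    (h : ∀ a b : A, ‖a * b‖ ≤ γ * ‖b * a‖) (x : A) (m : Unitization ℂ A) :
    ‖(x : Unitization ℂ A) * m‖ ≤ γ * ‖m * (x : Unitization ℂ A)‖ := by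
  rw [inr_mul_eq_inr, mul_inr_eq_inr, norm_inr, norm_inr]
  exact norm_smul_add_mul_le_of_isApproximateUnit hl h _ _ _

theorem commute_of_norm_mul_le_of_isApproximateUnit [CompleteSpace A] (hl : l.IsApproximateUnit)
    (h : ∀ a b : A, ‖a * b‖ ≤ γ * ‖b * a‖) (a b : A) : Commute a b := by
  suffices Commute (a : Unitization ℂ A) b by
    apply Unitization.inr_injective (R := ℂ)
    simpa only [Unitization.inr_mul] using this.eq
  refine commute_of_forall_norm_exp_smul_conj_le (C := γ * ‖b‖) fun z => ?_
  set m := exp (z • (a : Unitization ℂ A))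
  obtain ⟨c, hc⟩ : ∃ c : A, m * (b : Unitization ℂ A) = c := ⟨_, Unitization.mul_inr_eq_inr b m⟩
  calc ‖m * b * exp (-(z • (a : Unitization ℂ A)))‖
      ≤ γ * ‖exp (-(z • (a : Unitization ℂ A))) * (m * b)‖ := by
        rw [hc]; exact Unitization.norm_inr_mul_le_of_isApproximateUnit hl h c _
    _ = γ * ‖b‖ := by rw [← mul_assoc, exp_neg_mul_exp, one_mul, Unitization.norm_inr]

end LePage

theorem stmt_18 (A : Type*) [NonUnitalNormedRing A] [StarRing A] [CStarRing A]
    [NormedSpace ℂ A] [IsScalarTower ℂ A A] [SMulCommClass ℂ A A] [StarModule ℂ A]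
    [CompleteSpace A] :
    (∀ a b : A, a * b = b * a) ↔
      ∃ γ : ℝ, 0 < γ ∧ ∀ a b : A, ‖a * b‖ ≤ γ * ‖b * a‖ := by
  refine ⟨fun h => ⟨1, one_pos, fun a b => by rw [h a b, one_mul]⟩, ?_⟩
  rintro ⟨γ, -, h⟩ a b
  let _ : NonUnitalCStarAlgebra A := {}
  let _ := CStarAlgebra.spectralOrder A
  have _ := CStarAlgebra.spectralOrderedRing A
  exact commute_of_norm_mul_le_of_isApproximateUnit
    (CStarAlgebra.increasingApproximateUnit A).toIsApproximateUnit h a b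
end
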